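/- arXiv:2001.05739 — 3 statements merged into one kernel-verified Lean document; each statement's English description precedes it below -/
import Mathlib

section
/- Let ρ > 0, μ > 0, Y, Z be symmetric matrices, and suppose the symmetric matrix V̂ᵀ Z V̂ + ρ V̂ᵀ Y V̂ has spectral decomposition P D Pᵀ with P orthogonal and D diagonal. Define R̄ diagonal by R̄_ii = (D_ii + √(D_ii² + 4ρμ))/(2ρ) and R = P R̄ Pᵀ. Then R is positive definite and satisfies ρ R − μ R⁻¹ = V̂ᵀ Z V̂ + ρ V̂ᵀ Y V̂. -/
/-!
Conjugation by the orthogonal matrix `P` commutes with inversion and preserves positive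
definiteness, so everything reduces to the diagonal entries: `R̄ᵢᵢ` is the positive root of
`ρ r² - Dᵢᵢ r - μ = 0`, i.e. the positive solution of `ρ r - μ r⁻¹ = Dᵢᵢ`.
-/

open Matrix

section PositiveRoot

variable {ρ μ : ℝ}

theorem add_sqrt_div_pos (hρ : 0 < ρ) (hμ : 0 < μ) (d : ℝ) :
    0 < (d + √(d ^ 2 + 4 * ρ * μ)) / (2 * ρ) := by
  have : |d| < √(d ^ 2 + 4 * ρ * μ) := by
    rw [← Real.sqrt_sq_eq_abs]
    exact Real.sqrt_lt_sqrt (sq_nonneg _) (lt_add_of_pos_right _ (by positivity))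
  have := neg_abs_le d
  apply div_pos <;> linarith

theorem mul_sub_mul_inv_add_sqrt_div (hρ : 0 < ρ) (hμ : 0 < μ) (d : ℝ) :
    ρ * ((d + √(d ^ 2 + 4 * ρ * μ)) / (2 * ρ)) -
      μ * ((d + √(d ^ 2 + 4 * ρ * μ)) / (2 * ρ))⁻¹ = d := by
  have hr := (add_sqrt_div_pos hρ hμ d).ne'
  generalize hs : √(d ^ 2 + 4 * ρ * μ) = s at hr ⊢
  have hs2 : s ^ 2 = d ^ 2 + 4 * ρ * μ := hs ▸ Real.sq_sqrt (by positivity)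
  have hds : d + s ≠ 0 := fun h => hr (by rw [h, zero_div])
  field_simp
  linear_combination hs2

end PositiveRoot

namespace Matrix

variable {n : Type*} [Fintype n] [DecidableEq n]

theorem inv_diagonal_of_ne_zero {K : Type*} [Field K] {v : n → K} (hv : ∀ i, v i ≠ 0) :
    (diagonal v)⁻¹ = diagonal fun i => (v i)⁻¹ := by
  refine inv_eq_left_inv ?_
  rw [diagonal_mul_diagonal, ← diagonal_one]
  exact congrArg diagonal (funext fun i => inv_mul_cancel₀ (hv i))

theorem inv_mul_mul_transpose_of_transpose_mul_self_eq_one {R : Type*} [CommRing R]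
    {A P : Matrix n n R} (hP : Pᵀ * P = 1) : (P * A * Pᵀ)⁻¹ = P * A⁻¹ * Pᵀ := by
  rw [mul_inv_rev, mul_inv_rev, inv_eq_left_inv hP, inv_eq_right_inv hP, Matrix.mul_assoc]

theorem PosDef.mul_mul_transpose_of_transpose_mul_self_eq_one {A P : Matrix n n ℝ}
    (hA : A.PosDef) (hP : Pᵀ * P = 1) : (P * A * Pᵀ).PosDef := by
  have hinj : Function.Injective P.vecMul :=
    Function.LeftInverse.injective (g := fun v => v ᵥ* Pᵀ) fun v => by
      simp [vecMul_vecMul, mul_eq_one_comm.mp hP]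
  simpa using hA.mul_mul_conjTranspose_same hinj

end Matrix

theorem stmt_2_general (m k : ℕ) (ρ μ : ℝ) (hρ : 0 < ρ) (hμ : 0 < μ)
    (Y Z : Matrix (Fin m) (Fin m) ℝ)
    (Vhat : Matrix (Fin m) (Fin k) ℝ)
    (P D : Matrix (Fin k) (Fin k) ℝ) (hP : Pᵀ * P = 1) (hD : D.IsDiag)
    (hdecomp : Vhatᵀ * Z * Vhat + ρ • (Vhatᵀ * Y * Vhat) = P * D * Pᵀ)
    (Rbar : Matrix (Fin k) (Fin k) ℝ)
    (hRbar : Rbar = Matrix.diagonal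
      (fun i => (D i i + Real.sqrt ((D i i) ^ 2 + 4 * ρ * μ)) / (2 * ρ)))
    (R : Matrix (Fin k) (Fin k) ℝ) (hR : R = P * Rbar * Pᵀ) :
    R.PosDef ∧ ρ • R - μ • R⁻¹ = Vhatᵀ * Z * Vhat + ρ • (Vhatᵀ * Y * Vhat) := by
  have hRbar_pos : Rbar.PosDef := hRbar ▸ PosDef.diagonal fun i => add_sqrt_div_pos hρ hμ _
  have hRbar_inv : Rbar⁻¹ = diagonal fun i =>
      ((D i i + Real.sqrt ((D i i) ^ 2 + 4 * ρ * μ)) / (2 * ρ))⁻¹ :=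
    hRbar ▸ inv_diagonal_of_ne_zero fun i => (add_sqrt_div_pos hρ hμ _).ne'
  have hdiag : ρ • Rbar - μ • Rbar⁻¹ = D := by
    rw [hRbar_inv, hRbar, ← diagonal_smul, ← diagonal_smul, diagonal_sub]
    conv_rhs => rw [← hD.diagonal_diag]
    exact congrArg diagonal (funext fun i => mul_sub_mul_inv_add_sqrt_div hρ hμ _)
  refine ⟨hR ▸ hRbar_pos.mul_mul_transpose_of_transpose_mul_self_eq_one hP, ?_⟩
  rw [hdecomp, hR, inv_mul_mul_transpose_of_transpose_mul_self_eq_one hP, ← hdiag,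
    Matrix.mul_sub, Matrix.sub_mul, Matrix.mul_smul, Matrix.mul_smul, Matrix.smul_mul,
    Matrix.smul_mul]

theorem stmt_2 (m k : ℕ) (ρ μ : ℝ) (hρ : 0 < ρ) (hμ : 0 < μ)
    (Y Z : Matrix (Fin m) (Fin m) ℝ) (hY : Y.IsSymm) (hZ : Z.IsSymm)
    (Vhat : Matrix (Fin m) (Fin k) ℝ) (hV : Vhatᵀ * Vhat = 1)
    (P D : Matrix (Fin k) (Fin k) ℝ) (hP : Pᵀ * P = 1) (hD : D.IsDiag)
    (hdecomp : Vhatᵀ * Z * Vhat + ρ • (Vhatᵀ * Y * Vhat) = P * D * Pᵀ)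
    (Rbar : Matrix (Fin k) (Fin k) ℝ)
    (hRbar : Rbar = Matrix.diagonal
      (fun i => (D i i + Real.sqrt ((D i i) ^ 2 + 4 * ρ * μ)) / (2 * ρ)))
    (R : Matrix (Fin k) (Fin k) ℝ) (hR : R = P * Rbar * Pᵀ) :
    R.PosDef ∧ ρ • R - μ • R⁻¹ = Vhatᵀ * Z * Vhat + ρ • (Vhatᵀ * Y * Vhat) :=
  stmt_2_general m k ρ μ hρ hμ Y Z Vhat P D hP hD hdecomp Rbar hRbar R hR
end

section
/- The set of n×n permutation matrices equals the intersection of the orthogonal matrices {X : XXᵀ = I}, the doubly stochastic row/column-sum constraints {X : Xe = Xᵀe = e}, and the nonnegative matrices {X : X ≥ 0 entrywise}. -/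
/-!
A nonnegative row `v` with `∑ vᵢ = 1` has entries in `[0, 1]`, so `vᵢ² ≤ vᵢ`; if moreover
`∑ vᵢ² = 1` (a diagonal entry of `X Xᵀ = 1`), equality holds termwise and every entry is `0` or `1`,
whence `v` is a standard basis vector. Each row of `X` is then `e_{f i}`, and the column sums being
`1` say exactly that `f` is a bijection.
-/

open Finset Function Matrix

section Vector

variable {ι R : Type*} [Fintype ι] [Ring R] [LinearOrder R] [IsStrictOrderedRing R]

theorem eq_zero_or_one_of_sum_eq_one_of_sum_mul_self_eq_one {v : ι → R} (hv : ∀ i, 0 ≤ v i)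
    (hsum : ∑ i, v i = 1) (hsq : ∑ i, v i * v i = 1) (i : ι) : v i = 0 ∨ v i = 1 := by
  have hle : ∀ j ∈ univ, v j * v j ≤ v j := fun j _ =>
    mul_le_of_le_one_right (hv j) (hsum ▸ single_le_sum (fun k _ => hv k) (mem_univ j))
  have hidem : IsIdempotentElem (v i) :=
    (sum_eq_sum_iff_of_le hle).mp (hsq.trans hsum.symm) i (mem_univ i)
  exact IsIdempotentElem.iff_eq_zero_or_one.mp hidem

theorem exists_eq_single_of_sum_eq_one_of_sum_mul_self_eq_one [DecidableEq ι] {v : ι → R}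
    (hv : ∀ i, 0 ≤ v i) (hsum : ∑ i, v i = 1) (hsq : ∑ i, v i * v i = 1) :
    ∃ k, v = Pi.single k 1 := by
  obtain ⟨k, -, hk⟩ := exists_ne_zero_of_sum_ne_zero (hsum ▸ one_ne_zero : ∑ i, v i ≠ 0)
  have hk1 : v k = 1 :=
    (eq_zero_or_one_of_sum_eq_one_of_sum_mul_self_eq_one hv hsum hsq k).resolve_left hk
  refine ⟨k, funext fun j => ?_⟩
  rcases eq_or_ne j k with rfl | hjk
  · simp [hk1]
  · have : v j + v k ≤ 1 := hsum ▸ add_le_sum (fun i _ => hv i) (mem_univ j) (mem_univ k) hjk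
    rw [Pi.single_eq_of_ne hjk]
    exact le_antisymm (by rw [hk1] at this; simpa using this) (hv j)

end Vector

theorem bijective_of_sum_single_eq_one {ι κ R : Type*} [Fintype ι] [DecidableEq κ]
    [AddCommMonoidWithOne R] [CharZero R] {f : ι → κ}
    (h : ∀ j, ∑ i, (Pi.single (f i) 1 : κ → R) j = 1) : Bijective f := by
  refine (bijective_iff_existsUnique f).mpr fun j => ?_
  have hcard : #{i | f i = j} = 1 := by
    have := h j
    simp only [Pi.single_apply, sum_boole] at this
    simp_rw [eq_comm (a := j)] at this
    exact_mod_cast this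
  obtain ⟨i, hi⟩ := card_eq_one.mp hcard
  refine ⟨i, ?_, fun i' hi' => ?_⟩
  · simpa using (Finset.ext_iff.mp hi i).mpr (mem_singleton_self i)
  · simpa using (Finset.ext_iff.mp hi i').mp (by simpa using hi')

namespace Matrix

variable {ι R : Type*} [Fintype ι] [DecidableEq ι]

theorem permMatrix_mul_transpose_self [NonAssocSemiring R] (σ : Equiv.Perm ι) :
    σ.permMatrix R * (σ.permMatrix R)ᵀ = 1 := by
  rw [transpose_permMatrix, ← permMatrix_mul, inv_mul_cancel, permMatrix_one]

variable [Ring R] [LinearOrder R] [IsStrictOrderedRing R]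

theorem exists_eq_permMatrix_of_mul_transpose_self_eq_one {X : Matrix ι ι R}
    (horth : X * Xᵀ = 1) (hX : X ∈ doublyStochastic R ι) :
    ∃ σ : Equiv.Perm ι, X = σ.permMatrix R := by
  have hrow : ∀ i, ∃ k, X i = Pi.single k 1 := fun i =>
    exists_eq_single_of_sum_eq_one_of_sum_mul_self_eq_one (fun j => hX.1 i j)
      (sum_row_of_mem_doublyStochastic hX i)
      (by simpa [mul_apply] using congr_fun₂ horth i i)
  choose f hf using hrow
  have hbij : Bijective f := bijective_of_sum_single_eq_one (R := R) fun j => by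
    simpa only [← hf] using sum_col_of_mem_doublyStochastic hX j
  refine ⟨Equiv.ofBijective f hbij, funext fun i => ?_⟩
  simp [hf]

theorem exists_eq_permMatrix_iff {X : Matrix ι ι R} :
    (∃ σ : Equiv.Perm ι, X = σ.permMatrix R) ↔ X * Xᵀ = 1 ∧ X ∈ doublyStochastic R ι := by
  refine ⟨?_, fun h => exists_eq_permMatrix_of_mul_transpose_self_eq_one h.1 h.2⟩
  rintro ⟨σ, rfl⟩
  exact ⟨permMatrix_mul_transpose_self σ, permMatrix_mem_doublyStochastic⟩

end Matrix

theorem stmt_5 (n : ℕ) :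
    {X : Matrix (Fin n) (Fin n) ℝ | ∃ σ : Equiv.Perm (Fin n), X = σ.permMatrix ℝ} =
      {X : Matrix (Fin n) (Fin n) ℝ | X * Xᵀ = 1} ∩
      {X : Matrix (Fin n) (Fin n) ℝ |
        X.mulVec (fun _ => 1) = (fun _ => 1) ∧ Xᵀ.mulVec (fun _ => 1) = (fun _ => 1)} ∩
      {X : Matrix (Fin n) (Fin n) ℝ | ∀ i j, 0 ≤ X i j} := by
  ext X
  simp only [Set.mem_ofPred_eq, Set.mem_inter_iff, exists_eq_permMatrix_iff, mem_doublyStochastic,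
    mulVec_transpose]
  tauto
end

section
/- Saddle point theorem for the barrier Lagrangian: fix μ > 0, let L₀(R,Y,Z) = ⟨L_Q, Y⟩ + 𝕀(Y) − μ log(det R) + ⟨Z, Y − V̂ R V̂ᵀ⟩, where 𝕀(Y) = 0 if 𝒢_J(Y) = E₀₀ and +∞ otherwise. Suppose (R*, Z*) satisfy: (−V̂ᵀZ*V̂)R* = μI, 𝒢_J(V̂R*V̂ᵀ) = E₀₀, 𝒢_J(L_Q + Z*) = L_Q + Z*, R* positive definite, and −V̂ᵀZ*V̂ positive semidefinite. Set Y* = V̂R*V̂ᵀ. Then max_Z L₀(R*,Y*,Z) = L₀(R*,Y*,Z*) = min_{R ≻ 0, Y} L₀(R,Y,Z*), i.e., (R*,Y*,Z*) is a saddle point of L₀. -/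
/-! At `Y* = V̂ R* V̂ᵀ` the coupling term of `L₀` vanishes, so `L₀(R*, Y*, ·)` is constant.
For the minimisation, `𝒢_J(L_Q + Z*) = L_Q + Z*` makes `⟨L_Q + Z*, Y⟩` depend only on
`𝒢_J(Y) = E₀₀`, so on the feasible set `L₀(R, Y, Z*)` equals a constant plus the barrier function
`⟨S, R⟩ − μ log det R` with `S = −V̂ᵀZ*V̂ = μ R*⁻¹`. This is minimised at `R*`: conjugating by
`R*^{-1/2}` reduces it to `log det M ≤ tr M − k`, i.e. `log λ ≤ λ − 1` on the eigenvalues. -/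

open Matrix

open Classical in
/-- The gangster operator: keeps entries indexed by `J ∪ Jᵀ`, zeros out the rest. -/
noncomputable def gangster {m : ℕ} (J : Set (Fin m × Fin m))
    (Y : Matrix (Fin m) (Fin m) ℝ) : Matrix (Fin m) (Fin m) ℝ :=
  Matrix.of fun i j => if (i, j) ∈ J ∨ (j, i) ∈ J then Y i j else 0

open Classical in
/-- The unaugmented barrier Lagrangian `L₀(R,Y,Z) = ⟨L_Q,Y⟩ + 𝕀(Y) − μ log det R
+ ⟨Z, Y − V̂ R V̂ᵀ⟩`, with the indicator taking the value `+∞`. -/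
noncomputable def L0 {m k : ℕ} (J : Set (Fin m × Fin m)) (μ : ℝ)
    (LQ E₀₀ : Matrix (Fin m) (Fin m) ℝ) (Vhat : Matrix (Fin m) (Fin k) ℝ)
    (R : Matrix (Fin k) (Fin k) ℝ) (Y Z : Matrix (Fin m) (Fin m) ℝ) : EReal :=
  (((LQ * Y).trace - μ * Real.log R.det
      + (Z * (Y - Vhat * R * Vhatᵀ)).trace : ℝ) : EReal)
    + (if gangster J Y = E₀₀ then (0 : EReal) else ⊤)

namespace Matrix

variable {n : Type*} [Fintype n] [DecidableEq n]

theorem PosDef.log_det_le_trace_sub_card {M : Matrix n n ℝ} (hM : M.PosDef) :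
    Real.log M.det ≤ M.trace - Fintype.card n := by
  have hH := hM.isHermitian
  calc Real.log M.det = ∑ i, Real.log (hH.eigenvalues i) := by
        rw [hH.det_eq_prod_eigenvalues]
        exact Real.log_prod fun i _ => (hM.eigenvalues_pos i).ne'
    _ ≤ ∑ i, (hH.eigenvalues i - 1) :=
        Finset.sum_le_sum fun i _ => Real.log_le_sub_one_of_pos (hM.eigenvalues_pos i)
    _ = M.trace - Fintype.card n := by
        simp [hH.trace_eq_sum_eigenvalues, Finset.sum_sub_distrib]

open scoped MatrixOrder in
theorem PosDef.log_det_sub_log_det_le {A B : Matrix n n ℝ} (hA : A.PosDef) (hB : B.PosDef) :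
    Real.log B.det - Real.log A.det ≤ (A⁻¹ * B).trace - Fintype.card n := by
  set W := CFC.sqrt A⁻¹
  have hWW : W * W = A⁻¹ := CFC.sqrt_mul_sqrt_self _ hA.inv.posSemidef.nonneg
  have hWs : star W = W := (CFC.sqrt_nonneg A⁻¹).posSemidef.isHermitian
  have hdetW : W.det * W.det = A.det⁻¹ := by
    rw [← det_mul, hWW, det_nonsing_inv, Ring.inverse_eq_inv']
  have hW : IsUnit W := (isUnit_iff_isUnit_det W).mpr <|
    isUnit_of_mul_isUnit_left (hdetW ▸ (inv_pos.mpr hA.det_pos).ne'.isUnit)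
  have hM : (W * B * star W).PosDef := (IsUnit.posDef_star_right_conjugate_iff hW).mpr hB
  rw [hWs] at hM
  have htr : (W * B * W).trace = (A⁻¹ * B).trace := by
    rw [trace_mul_cycle, hWW]
  have hdet : (W * B * W).det = B.det * A.det⁻¹ := by
    rw [det_mul, det_mul, ← hdetW]; ring
  have := hM.log_det_le_trace_sub_card
  rw [htr, hdet, Real.log_mul hB.det_pos.ne' (inv_ne_zero hA.det_pos.ne'), Real.log_inv] at this
  linarith

theorem PosDef.trace_mul_sub_log_det_le {A B S : Matrix n n ℝ} {μ : ℝ} (hA : A.PosDef)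
    (hB : B.PosDef) (hμ : 0 ≤ μ) (hS : S * A = μ • 1) :
    (S * A).trace - μ * Real.log A.det ≤ (S * B).trace - μ * Real.log B.det := by
  have hS' : S = μ • A⁻¹ :=
    calc S = S * A * A⁻¹ := by
          rw [mul_assoc, mul_nonsing_inv _ ((isUnit_iff_isUnit_det A).mp hA.isUnit), mul_one]
      _ = μ • A⁻¹ := by rw [hS, smul_mul, one_mul]
  have hSB : (S * B).trace = μ * (A⁻¹ * B).trace := by
    rw [hS', smul_mul, trace_smul, smul_eq_mul]
  rw [hS, trace_smul, trace_one, smul_eq_mul, hSB]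
  have := mul_le_mul_of_nonneg_left (hA.log_det_sub_log_det_le hB) hμ
  linarith

end Matrix

theorem trace_mul_gangster {m : ℕ} {J : Set (Fin m × Fin m)} {A : Matrix (Fin m) (Fin m) ℝ}
    (hA : gangster J A = A) (Y : Matrix (Fin m) (Fin m) ℝ) :
    (A * gangster J Y).trace = (A * Y).trace := by
  simp only [trace, diag, mul_apply]
  refine Finset.sum_congr rfl fun i _ => Finset.sum_congr rfl fun j _ => ?_
  by_cases h : (i, j) ∈ J ∨ (j, i) ∈ J
  · simp [gangster, h.symm]
  · rw [← hA]
    simp [gangster, h]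

section Lagrangian

variable {m k : ℕ} {J : Set (Fin m × Fin m)} {μ : ℝ} {LQ E₀₀ Y Z : Matrix (Fin m) (Fin m) ℝ}
  {Vhat : Matrix (Fin m) (Fin k) ℝ} {R : Matrix (Fin k) (Fin k) ℝ}

theorem L0_eq_of_gangster_eq (hY : gangster J Y = E₀₀) :
    L0 J μ LQ E₀₀ Vhat R Y Z =
      (((LQ + Z) * Y).trace + (-(Vhatᵀ * Z * Vhat) * R).trace - μ * Real.log R.det : ℝ) := by
  have hcycle : (Z * (Vhat * R * Vhatᵀ)).trace = (Vhatᵀ * Z * Vhat * R).trace := by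
    rw [← Matrix.mul_assoc, ← Matrix.mul_assoc, trace_mul_comm]
    simp only [Matrix.mul_assoc]
  simp only [L0, if_pos hY, add_zero, EReal.coe_eq_coe_iff, Matrix.add_mul, Matrix.mul_sub,
    Matrix.neg_mul, trace_add, trace_sub, trace_neg, hcycle]
  ring

theorem L0_eq_top_of_gangster_ne (hY : gangster J Y ≠ E₀₀) : L0 J μ LQ E₀₀ Vhat R Y Z = ⊤ := by
  simp only [L0, if_neg hY]
  exact EReal.coe_add_top _

end Lagrangian

theorem stmt_14_general (m k : ℕ) (J : Set (Fin m × Fin m)) (μ : ℝ) (hμ : 0 < μ)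
    (LQ E₀₀ : Matrix (Fin m) (Fin m) ℝ)
    (Vhat : Matrix (Fin m) (Fin k) ℝ)
    (Rstar : Matrix (Fin k) (Fin k) ℝ) (Zstar : Matrix (Fin m) (Fin m) ℝ)
    (hcrit : (-(Vhatᵀ * Zstar * Vhat)) * Rstar = μ • (1 : Matrix (Fin k) (Fin k) ℝ))
    (hfeas : gangster J (Vhat * Rstar * Vhatᵀ) = E₀₀)
    (hLZ : gangster J (LQ + Zstar) = LQ + Zstar)
    (hRpd : Rstar.PosDef)
    (Ystar : Matrix (Fin m) (Fin m) ℝ) (hYs : Ystar = Vhat * Rstar * Vhatᵀ) :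
    (∀ Z : Matrix (Fin m) (Fin m) ℝ, Z.IsSymm →
        L0 J μ LQ E₀₀ Vhat Rstar Ystar Z ≤ L0 J μ LQ E₀₀ Vhat Rstar Ystar Zstar) ∧
    (∀ (R : Matrix (Fin k) (Fin k) ℝ) (Y : Matrix (Fin m) (Fin m) ℝ),
        R.IsSymm → R.PosDef → Y.IsSymm →
        L0 J μ LQ E₀₀ Vhat Rstar Ystar Zstar ≤ L0 J μ LQ E₀₀ Vhat R Y Zstar) := by
  subst hYs
  refine ⟨fun Z _ => by simp [L0], fun R Y _ hR _ => ?_⟩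
  by_cases hY : gangster J Y = E₀₀
  · rw [L0_eq_of_gangster_eq hfeas, L0_eq_of_gangster_eq hY, EReal.coe_le_coe_iff,
      ← trace_mul_gangster hLZ Y, hY, ← hfeas, trace_mul_gangster hLZ]
    linarith [hRpd.trace_mul_sub_log_det_le hR hμ.le hcrit]
  · rw [L0_eq_top_of_gangster_ne hY]
    exact le_top

theorem stmt_14 (m k : ℕ) (J : Set (Fin m × Fin m)) (μ : ℝ) (hμ : 0 < μ)
    (LQ E₀₀ : Matrix (Fin m) (Fin m) ℝ) (hLQ : LQ.IsSymm)
    (hE : E₀₀.IsSymm) (hGE : gangster J E₀₀ = E₀₀)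
    (Vhat : Matrix (Fin m) (Fin k) ℝ) (hV : Vhatᵀ * Vhat = 1)
    (Rstar : Matrix (Fin k) (Fin k) ℝ) (Zstar : Matrix (Fin m) (Fin m) ℝ)
    (hZs : Zstar.IsSymm)
    (hcrit : (-(Vhatᵀ * Zstar * Vhat)) * Rstar = μ • (1 : Matrix (Fin k) (Fin k) ℝ))
    (hfeas : gangster J (Vhat * Rstar * Vhatᵀ) = E₀₀)
    (hLZ : gangster J (LQ + Zstar) = LQ + Zstar)
    (hRpd : Rstar.PosDef)
    (hpsd : (-(Vhatᵀ * Zstar * Vhat)).PosSemidef)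
    (Ystar : Matrix (Fin m) (Fin m) ℝ) (hYs : Ystar = Vhat * Rstar * Vhatᵀ) :
    (∀ Z : Matrix (Fin m) (Fin m) ℝ, Z.IsSymm →
        L0 J μ LQ E₀₀ Vhat Rstar Ystar Z ≤ L0 J μ LQ E₀₀ Vhat Rstar Ystar Zstar) ∧
    (∀ (R : Matrix (Fin k) (Fin k) ℝ) (Y : Matrix (Fin m) (Fin m) ℝ),
        R.IsSymm → R.PosDef → Y.IsSymm →
        L0 J μ LQ E₀₀ Vhat Rstar Ystar Zstar ≤ L0 J μ LQ E₀₀ Vhat R Y Zstar) :=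
  stmt_14_general m k J μ hμ LQ E₀₀ Vhat Rstar Zstar hcrit hfeas hLZ hRpd Ystar hYs
end
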